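/- Assume n ≥ 2 and T ≥ 2, let ε ∈ (0,1), let v_max = max_{1≤i≤n} v_i, and set α = v_max/(1+v_max). If T·α < 12·ln(nT)/ε³ and v_max < 1/ε, then OPT^DP({1,…,n}) ≤ 300·ln²(nT)/ε⁶. -/

import Mathlib

open Finset

/-- MNL choice probability of product `i` when assortment `S` is offered. -/
noncomputable def phi {n : ℕ} (v : Fin n → ℝ) (S : Finset (Fin n)) (i : Fin n) : ℝ :=
  v i / (1 + ∑ j ∈ S, v j)

/-- MNL no-purchase probability when assortment `S` is offered. -/
noncomputable def phi0 {n : ℕ} (v : Fin n → ℝ) (S : Finset (Fin n)) : ℝ :=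
  1 / (1 + ∑ j ∈ S, v j)

/-- The dynamic-programming value functions `M_t(ℓ)` of the adaptive maximum load
problem over the universe `U`: `M_0(ℓ) = max_i ℓ_i` and
`M_t(ℓ) = max_{S ⊆ U} (φ_0(S)·M_{t-1}(ℓ) + ∑_{i∈S} φ_i(S)·M_{t-1}(ℓ + e_i))`. -/
noncomputable def dpVal {n : ℕ} (v : Fin n → ℝ) (U : Finset (Fin n)) :
    ℕ → (Fin n → ℕ) → ℝ
  | 0, ℓ => ((Finset.univ.sup ℓ : ℕ) : ℝ)
  | t + 1, ℓ =>
      U.powerset.sup' ⟨∅, Finset.empty_mem_powerset U⟩ fun S =>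
        phi0 v S * dpVal v U t ℓ +
          ∑ i ∈ S, phi v S i * dpVal v U t (Function.update ℓ i (ℓ i + 1))

/-- `OPT^DP(U) = M_T(0)`: the optimal expected maximum load achievable by an adaptive
policy offering assortments from the universe `U` to `T` sequentially arriving customers
making independent MNL choices. -/
noncomputable def dpOpt {n : ℕ} (v : Fin n → ℝ) (U : Finset (Fin n)) (T : ℕ) : ℝ :=
  dpVal v U T fun _ => 0

/-! The soft-max `Φ_θ(ℓ) = θ⁻¹ log ∑ᵢ exp (θ ℓᵢ)` dominates the maximum load, and a sale of
product `i` raises it by at most `θ⁻¹ (e^θ - 1)` times the soft-max weight of `i`. Every MNL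
choice probability is at most `α = v_max / (1 + v_max)`, whatever the assortment, so each
customer raises `Φ_θ` by at most `α (e^θ - 1) / θ` in expectation, and
`OPT^DP ≤ log n / θ + T α (e^θ - 1) / θ`. With `θ = 1` this is at most
`log (nT) + 24 log (nT) / ε³ ≤ 25 log (nT) / ε³`, which is below `300 log² (nT) / ε⁶`
because `log (nT) / ε³ ≥ 1`. -/

open Real

section SoftMax

variable {ι : Type*} [Fintype ι]

noncomputable def softMax (θ : ℝ) (ℓ : ι → ℕ) : ℝ :=
  log (∑ i, exp (θ * ℓ i)) / θ

noncomputable def softMaxWeight (θ : ℝ) (ℓ : ι → ℕ) (i : ι) : ℝ :=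
  exp (θ * ℓ i) / ∑ j, exp (θ * ℓ j)

lemma softMaxWeight_nonneg (θ : ℝ) (ℓ : ι → ℕ) (i : ι) : 0 ≤ softMaxWeight θ ℓ i := by
  unfold softMaxWeight; positivity

lemma sum_softMaxWeight_le_one (θ : ℝ) (ℓ : ι → ℕ) (s : Finset ι) :
    ∑ i ∈ s, softMaxWeight θ ℓ i ≤ 1 := by
  rcases s.eq_empty_or_nonempty with rfl | ⟨i, -⟩
  · simp
  have hA : 0 < ∑ j, exp (θ * ℓ j) := sum_pos (fun j _ => exp_pos _) ⟨i, mem_univ i⟩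
  calc ∑ i ∈ s, softMaxWeight θ ℓ i ≤ ∑ i, softMaxWeight θ ℓ i :=
        sum_le_sum_of_subset_of_nonneg s.subset_univ
          fun j _ _ => softMaxWeight_nonneg θ ℓ j
    _ = 1 := by simp only [softMaxWeight, ← sum_div, div_self hA.ne']

lemma softMax_zero (θ : ℝ) : softMax θ (0 : ι → ℕ) = log (Fintype.card ι) / θ := by
  simp [softMax]

lemma sup_le_softMax {θ : ℝ} (hθ : 0 < θ) (ℓ : ι → ℕ) :
    ((univ.sup ℓ : ℕ) : ℝ) ≤ softMax θ ℓ := by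
  rcases isEmpty_or_nonempty ι with hι | hι
  · simp [softMax]
  obtain ⟨i, -, hi⟩ := exists_mem_eq_sup univ univ_nonempty ℓ
  have hterm : exp (θ * ℓ i) ≤ ∑ j, exp (θ * ℓ j) :=
    single_le_sum (f := fun j => exp (θ * ℓ j)) (fun j _ => (exp_pos _).le)
      (mem_univ i)
  rw [hi, softMax, le_div_iff₀ hθ, mul_comm]
  exact (le_log_iff_exp_le (sum_pos (fun j _ => exp_pos _) univ_nonempty)).2 hterm

variable [DecidableEq ι]

lemma sum_exp_update_succ (θ : ℝ) (ℓ : ι → ℕ) (i : ι) :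
    ∑ j, exp (θ * (Function.update ℓ i (ℓ i + 1) j : ℕ))
      = ∑ j, exp (θ * ℓ j) + exp (θ * ℓ i) * (exp θ - 1) := by
  have hcomp : (fun j => exp (θ * (Function.update ℓ i (ℓ i + 1) j : ℕ)))
      = Function.update (fun j => exp (θ * ℓ j)) i (exp (θ * ℓ i) * exp θ) := by
    ext j
    rcases eq_or_ne j i with rfl | hj
    · simp [mul_add, exp_add]
    · simp [hj]
  rw [hcomp, sum_update_of_mem (mem_univ i),
    sum_eq_add_sum_sdiff_singleton_of_mem (mem_univ i) (fun j => exp (θ * ℓ j))]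
  ring

lemma softMax_update_succ_le {θ : ℝ} (hθ : 0 < θ) (ℓ : ι → ℕ) (i : ι) :
    softMax θ (Function.update ℓ i (ℓ i + 1))
      ≤ softMax θ ℓ + (exp θ - 1) / θ * softMaxWeight θ ℓ i := by
  set A := ∑ j, exp (θ * ℓ j)
  set x := exp (θ * ℓ i) * (exp θ - 1)
  have hA : 0 < A := sum_pos (fun j _ => exp_pos _) ⟨i, mem_univ i⟩
  have hx : 0 ≤ x := mul_nonneg (exp_pos _).le (by linarith [add_one_le_exp θ])
  have hlog : log (A + x) ≤ log A + x / A := by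
    have := log_le_sub_one_of_pos (show 0 < (A + x) / A by positivity)
    rw [log_div (by positivity) hA.ne'] at this
    have hxA : (A + x) / A - 1 = x / A := by field_simp; ring
    linarith
  calc softMax θ (Function.update ℓ i (ℓ i + 1)) = log (A + x) / θ := by
        rw [softMax, sum_exp_update_succ]
    _ ≤ (log A + x / A) / θ := by gcongr
    _ = softMax θ ℓ + (exp θ - 1) / θ * softMaxWeight θ ℓ i := by
        rw [softMax, softMaxWeight]; ring

end SoftMax

section MNL

variable {n : ℕ} {v : Fin n → ℝ}

lemma one_add_sum_pos (hv : ∀ i, 0 ≤ v i) (S : Finset (Fin n)) : 0 < 1 + ∑ j ∈ S, v j := by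
  have := sum_nonneg fun j (_ : j ∈ S) => hv j
  linarith

lemma phi0_add_sum_phi (hv : ∀ i, 0 ≤ v i) (S : Finset (Fin n)) :
    phi0 v S + ∑ i ∈ S, phi v S i = 1 := by
  have := one_add_sum_pos hv S
  simp only [phi0, phi, ← sum_div]
  field_simp

lemma phi_le_of_le (hv : ∀ i, 0 ≤ v i) {S : Finset (Fin n)} {i : Fin n} {a : ℝ} (hi : i ∈ S)
    (ha : v i ≤ a) : phi v S i ≤ a / (1 + a) := by
  have hvS : v i ≤ ∑ j ∈ S, v j := single_le_sum (fun j _ => hv j) hi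
  have hvi := hv i
  rw [phi, div_le_div_iff₀ (one_add_sum_pos hv S) (by linarith)]
  nlinarith

lemma phi0_mul_add_sum_phi_mul_le (hv : ∀ i, 0 ≤ v i) {S : Finset (Fin n)} {a c : ℝ}
    {b d : Fin n → ℝ} (ha : a ≤ c) (hb : ∀ i ∈ S, b i ≤ c + d i) :
    phi0 v S * a + ∑ i ∈ S, phi v S i * b i ≤ c + ∑ i ∈ S, phi v S i * d i := by
  have hD := one_add_sum_pos hv S
  have hphi0 : 0 ≤ phi0 v S := by unfold phi0; positivity
  have hphi : ∀ i, 0 ≤ phi v S i := fun i => div_nonneg (hv i) hD.le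
  calc phi0 v S * a + ∑ i ∈ S, phi v S i * b i
      ≤ phi0 v S * c + ∑ i ∈ S, phi v S i * (c + d i) := by
        gcongr with i hi
        · exact hphi i
        · exact hb i hi
    _ = (phi0 v S + ∑ i ∈ S, phi v S i) * c + ∑ i ∈ S, phi v S i * d i := by
        rw [sum_congr rfl fun i _ => mul_add _ c (d i), sum_add_distrib,
          ← sum_mul]
        ring
    _ = c + ∑ i ∈ S, phi v S i * d i := by rw [phi0_add_sum_phi hv, one_mul]

theorem dpVal_le_softMax_add (hv : ∀ i, 0 ≤ v i) {U : Finset (Fin n)} {α θ : ℝ} (hα : 0 ≤ α)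
    (hφ : ∀ S ⊆ U, ∀ i ∈ S, phi v S i ≤ α) (hθ : 0 < θ) (t : ℕ) (ℓ : Fin n → ℕ) :
    dpVal v U t ℓ ≤ softMax θ ℓ + t * (α * (exp θ - 1) / θ) := by
  induction t generalizing ℓ with
  | zero => simpa [dpVal] using sup_le_softMax hθ ℓ
  | succ t ih =>
    refine sup'_le _ _ fun S hS => ?_
    have hκ : 0 ≤ (exp θ - 1) / θ := div_nonneg (by linarith [add_one_le_exp θ]) hθ.le
    set d : Fin n → ℝ := fun i => (exp θ - 1) / θ * softMaxWeight θ ℓ i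
    have hd : ∀ i, 0 ≤ d i := fun i => mul_nonneg hκ (softMaxWeight_nonneg θ ℓ i)
    have hdrift : ∑ i ∈ S, phi v S i * d i ≤ α * (exp θ - 1) / θ :=
      calc ∑ i ∈ S, phi v S i * d i ≤ ∑ i ∈ S, α * d i :=
            sum_le_sum fun i hi =>
              mul_le_mul_of_nonneg_right (hφ S (mem_powerset.1 hS) i hi) (hd i)
        _ = α * ((exp θ - 1) / θ) * ∑ i ∈ S, softMaxWeight θ ℓ i := by
            simp only [d, mul_sum, mul_assoc]
        _ ≤ α * ((exp θ - 1) / θ) * 1 := by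
            gcongr
            exact sum_softMaxWeight_le_one θ ℓ S
        _ = α * (exp θ - 1) / θ := by ring
    have hstep := phi0_mul_add_sum_phi_mul_le hv (S := S) (ih ℓ) (d := d) fun i _ => by
      refine (ih (Function.update ℓ i (ℓ i + 1))).trans ?_
      linarith [softMax_update_succ_le hθ ℓ i]
    push_cast
    linarith

end MNL

/-- Low-weight regime: if `T·α < 12·ln(nT)/ε³` and `v_max < 1/ε`, where
`α = v_max/(1+v_max)`, then the optimal dynamic value is at most `300·ln²(nT)/ε⁶`. -/
theorem dp_polylog_bound_low_weight
    (n T : ℕ) (hn : 2 ≤ n) (hT : 2 ≤ T) (ε : ℝ) (hε0 : 0 < ε) (hε1 : ε < 1)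
    (v : Fin n → ℝ) (hv : ∀ i, 0 < v i)
    (vmax : ℝ)
    (hvmax : vmax = Finset.univ.sup' ⟨⟨0, by omega⟩, Finset.mem_univ _⟩ v)
    (hsmall : (T : ℝ) * (vmax / (1 + vmax)) < 12 * Real.log ((n : ℝ) * (T : ℝ)) / ε ^ 3) :
    dpOpt v Finset.univ T ≤ 300 * Real.log ((n : ℝ) * (T : ℝ)) ^ 2 / ε ^ 6 := by
  have hv' : ∀ i, 0 ≤ v i := fun i => (hv i).le
  have hle_vmax : ∀ i, v i ≤ vmax := fun i => hvmax ▸ le_sup' v (mem_univ i)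
  have hα : 0 ≤ vmax / (1 + vmax) := by
    have := (hv' ⟨0, by omega⟩).trans (hle_vmax _); positivity
  have hdp := dpVal_le_softMax_add (U := univ) hv' hα
    (fun S _ i hi => phi_le_of_le hv' hi (hle_vmax i)) one_pos T 0
  rw [softMax_zero, Fintype.card_fin, div_one, div_one] at hdp
  set L := log ((n : ℝ) * T)
  have hn' : (2 : ℝ) ≤ n := by exact_mod_cast hn
  have hT' : (2 : ℝ) ≤ T := by exact_mod_cast hT
  have hnT : (4 : ℝ) ≤ n * T := by nlinarith
  have hL : 1 ≤ L := (le_log_iff_exp_le (by linarith)).2 (by linarith [exp_one_lt_three])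
  have hlog_n : log n ≤ L := log_le_log (by linarith) (by nlinarith)
  have hε3 : ε ^ 3 ≤ 1 := pow_le_one₀ hε0.le hε1.le
  have hx : L ≤ L / ε ^ 3 := le_div_self (by linarith) (by positivity) hε3
  calc dpOpt v univ T ≤ log n + T * (vmax / (1 + vmax) * (exp 1 - 1)) := hdp
    _ = log n + (T * (vmax / (1 + vmax))) * (exp 1 - 1) := by ring
    _ ≤ L / ε ^ 3 + (12 * L / ε ^ 3) * 2 := by
        gcongr
        · exact hlog_n.trans hx
        · linarith [add_one_le_exp 1]
        · linarith [exp_one_lt_three]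
    _ = 25 * (L / ε ^ 3) := by ring
    _ ≤ 300 * (L / ε ^ 3) ^ 2 := by nlinarith
    _ = 300 * L ^ 2 / ε ^ 6 := by ring
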